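/- arXiv:1905.03451 — 3 statements merged into one kernel-verified Lean document; each statement's English description precedes it below -/
import Mathlib

section
/- Let G : [0, π] → ℝ be continuous and strictly decreasing. Then ∫₀^π G(t)·cos(t) dt > 0. -/
/-! Folding `[0, π]` at `π/2` by `t ↦ π - t`, which flips the sign of `cos`, turns the integral
into `∫₀^{π/2} (G t - G (π - t)) cos t`, whose integrand is positive on `(0, π/2)` when `G` is
strictly decreasing. -/

open Real Set MeasureTheory intervalIntegral

theorem integral_pi_div_two_pi_mul_cos_eq_neg_reflect (G : ℝ → ℝ) :
    ∫ t in π / 2..π, G t * cos t = -∫ t in (0 : ℝ)..π / 2, G (π - t) * cos t := by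
  have h := integral_comp_sub_left (fun t => G t * cos t) π (a := 0) (b := π / 2)
  rw [sub_zero, show π - π / 2 = π / 2 by ring] at h
  simp only [cos_pi_sub, mul_neg, intervalIntegral.integral_neg] at h
  exact h.symm

theorem IntervalIntegrable.reflect_mul_cos {G : ℝ → ℝ}
    (hG : IntervalIntegrable (fun t => G t * cos t) volume (π / 2) π) :
    IntervalIntegrable (fun t => G (π - t) * cos t) volume 0 (π / 2) := by
  have h := (hG.comp_sub_left π).neg.symm
  rw [sub_self, show π - π / 2 = π / 2 by ring] at h
  simpa only [Pi.neg_def, cos_pi_sub, mul_neg, neg_neg] using h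

theorem integral_mul_cos_eq_integral_sub_reflect_mul_cos {G : ℝ → ℝ}
    (hG : IntervalIntegrable (fun t => G t * cos t) volume 0 π) :
    ∫ t in (0 : ℝ)..π, G t * cos t = ∫ t in (0 : ℝ)..π / 2, (G t - G (π - t)) * cos t := by
  have hmid : π / 2 ∈ uIcc 0 π := by
    rw [uIcc_of_le pi_pos.le]; constructor <;> linarith [pi_pos]
  have hleft := hG.mono_set (uIcc_subset_uIcc left_mem_uIcc hmid)
  have hright := hG.mono_set (uIcc_subset_uIcc hmid right_mem_uIcc)
  simp only [sub_mul]
  rw [integral_sub hleft hright.reflect_mul_cos, ← integral_add_adjacent_intervals hleft hright,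
    integral_pi_div_two_pi_mul_cos_eq_neg_reflect, sub_eq_add_neg]

theorem sub_reflect_mul_cos_pos {G : ℝ → ℝ} (hG : StrictAntiOn G (Icc 0 π)) {t : ℝ}
    (ht : t ∈ Ioo 0 (π / 2)) : 0 < (G t - G (π - t)) * cos t := by
  obtain ⟨ht₀, ht₁⟩ := ht
  have hGt : G (π - t) < G t := hG ⟨ht₀.le, by linarith⟩ ⟨by linarith, by linarith⟩ (by linarith)
  exact mul_pos (sub_pos.mpr hGt) (cos_pos_of_mem_Ioo ⟨by linarith, ht₁⟩)

theorem stmt_10 (G : ℝ → ℝ)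
    (hc : ContinuousOn G (Set.Icc 0 Real.pi))
    (hmono : StrictAntiOn G (Set.Icc 0 Real.pi)) :
    0 < ∫ t in (0 : ℝ)..Real.pi, G t * Real.cos t := by
  have hπ := pi_pos
  rw [integral_mul_cos_eq_integral_sub_reflect_mul_cos
    ((hc.mul continuous_cos.continuousOn).intervalIntegrable_of_Icc hπ.le)]
  have hreflect : ContinuousOn (fun t => G (π - t)) (Icc 0 (π / 2)) :=
    hc.comp (continuous_const.sub continuous_id).continuousOn
      fun t ht => ⟨by linarith [ht.2], by linarith [ht.1]⟩
  have hfold : ContinuousOn (fun t => (G t - G (π - t)) * cos t) (Icc 0 (π / 2)) :=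
    ((hc.mono (Icc_subset_Icc_right (by linarith))).sub hreflect).mul continuous_cos.continuousOn
  exact intervalIntegral_pos_of_pos_on (hfold.intervalIntegrable_of_Icc (by linarith))
    (fun t ht => sub_reflect_mul_cos_pos hmono ht) (by linarith)
end

section
/- Let G : [0, π] → ℝ be continuous and strictly increasing. Then ∫₀^π G(t)·cos(t) dt < 0. -/
/-!
The substitution `t ↦ π - t` flips the sign of `cos`, so twice the integral equals
`∫₀^π (G t - G (π - t)) cos t`. For monotone `G` the two factors of this integrand have opposite
signs on `[0, π]` (both change sign at `π / 2`), and at `t = 0` it equals `G 0 - G π < 0`.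
-/

open Real Set intervalIntegral

lemma integral_comp_pi_sub_mul_cos (f : ℝ → ℝ) :
    ∫ t in (0 : ℝ)..π, f (π - t) * cos t = -∫ t in (0 : ℝ)..π, f t * cos t := by
  have h := integral_comp_sub_left (fun t ↦ f t * cos t) π (a := 0) (b := π)
  simp only [sub_self, sub_zero, cos_pi_sub, mul_neg] at h
  rw [← h, integral_neg, neg_neg]

lemma integral_sub_comp_pi_sub_mul_cos {f : ℝ → ℝ}
    (hf : IntervalIntegrable (fun t ↦ f t * cos t) MeasureTheory.volume 0 π) :
    ∫ t in (0 : ℝ)..π, (f (π - t) - f t) * cos t = -2 * ∫ t in (0 : ℝ)..π, f t * cos t := by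
  have hrefl : IntervalIntegrable (fun t ↦ f (π - t) * cos t) MeasureTheory.volume 0 π := by
    simpa only [sub_self, sub_zero, cos_pi_sub, mul_neg, Pi.neg_def, neg_neg] using
      (hf.comp_sub_left π).neg.symm
  simp only [sub_mul]
  rw [integral_sub hrefl hf, integral_comp_pi_sub_mul_cos]
  ring

lemma MonotoneOn.sub_comp_pi_sub_mul_cos_nonneg {G : ℝ → ℝ} (hG : MonotoneOn G (Icc 0 π))
    {t : ℝ} (ht : t ∈ Icc 0 π) : 0 ≤ (G (π - t) - G t) * cos t := by
  have ht' : π - t ∈ Icc 0 π := ⟨by linarith [ht.2], by linarith [ht.1]⟩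
  rcases le_total t (π / 2) with hle | hge
  · refine mul_nonneg (sub_nonneg.2 (hG ht ht' (by linarith))) ?_
    exact cos_nonneg_of_mem_Icc ⟨by linarith [ht.1, pi_pos], hle⟩
  · refine mul_nonneg_of_nonpos_of_nonpos (sub_nonpos.2 (hG ht' ht (by linarith))) ?_
    exact cos_nonpos_of_pi_div_two_le_of_le hge (by linarith [ht.2])

theorem stmt_11 (G : ℝ → ℝ)
    (hc : ContinuousOn G (Set.Icc 0 Real.pi))
    (hmono : StrictMonoOn G (Set.Icc 0 Real.pi)) :
    (∫ t in (0 : ℝ)..Real.pi, G t * Real.cos t) < 0 := by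
  have hmem0 : (0 : ℝ) ∈ Icc 0 π := ⟨le_rfl, pi_pos.le⟩
  have hmemπ : π ∈ Icc 0 π := ⟨pi_pos.le, le_rfl⟩
  have hGcos : ContinuousOn (fun t ↦ G t * cos t) (Icc 0 π) :=
    hc.mul continuous_cos.continuousOn
  have hrefl : ContinuousOn (fun t ↦ G (π - t)) (Icc 0 π) :=
    hc.comp (by fun_prop) fun t ht ↦ ⟨by linarith [ht.2], by linarith [ht.1]⟩
  have hpos : 0 < ∫ t in (0 : ℝ)..π, (G (π - t) - G t) * cos t := by
    refine integral_pos pi_pos ((hrefl.sub hc).mul continuous_cos.continuousOn)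
      (fun t ht ↦ hmono.monotoneOn.sub_comp_pi_sub_mul_cos_nonneg (Ioc_subset_Icc_self ht))
      ⟨0, hmem0, ?_⟩
    simpa only [sub_zero, cos_zero, mul_one, sub_pos] using hmono hmem0 hmemπ pi_pos
  rw [integral_sub_comp_pi_sub_mul_cos (hGcos.intervalIntegrable_of_Icc pi_pos.le)] at hpos
  linarith
end

section
/- Let φ, Φ : ℝ → ℝ be C³ and T-periodic, with φ'' + f(φ) = 0 and Φ'' + f'(φ(t))Φ + F₃(t) = 0, where f is C² and F₃ is C¹ and T-periodic with F₃' = F₁₃·φ' + F₂₃ for continuous T-periodic F₁₃, F₂₃. Then ∫₀^T (Φ(t)·f''(φ(t)) + F₁₃(t))·(φ'(t))² dt + ∫₀^T F₂₃(t)·φ'(t) dt = 0. -/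
/-!
The "Wronskian" `W = Φ' φ'' - Φ'' φ'` of the derivatives is `T`-periodic, being built from
derivatives of `T`-periodic functions. Differentiating it, the terms `Φ'' φ''` cancel, and
substituting `φ''' = -f'(φ) φ'` and `Φ''' = -(f''(φ) φ' Φ + f'(φ) Φ' + F₁₃ φ' + F₂₃)` from the
two equations turns `W'` into the integrand, whose integral over a period is `W(T) - W(0) = 0`.
-/

open Function MeasureTheory

theorem Function.Periodic.deriv {𝕜 F : Type*} [NontriviallyNormedField 𝕜] [NormedAddCommGroup F]
    [NormedSpace 𝕜 F] {f : 𝕜 → F} {c : 𝕜} (h : Periodic f c) : Periodic (deriv f) c := fun x => by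
  rw [← deriv_comp_add_const, show (fun y => f (y + c)) = f from funext h]

theorem Function.Periodic.integral_eq_zero_of_hasDerivAt {E : Type*} [NormedAddCommGroup E]
    [NormedSpace ℝ E] [CompleteSpace E] {g g' : ℝ → E} {T : ℝ} (hg : Periodic g T)
    (hderiv : ∀ t, HasDerivAt g (g' t) t) (a : ℝ) (hint : IntervalIntegrable g' volume a (a + T)) :
    ∫ t in a..a + T, g' t = 0 := by
  rw [intervalIntegral.integral_eq_sub_of_hasDerivAt (fun t _ => hderiv t) hint, hg a, sub_self]

theorem hasDerivAt_deriv_deriv_of_add_eq_zero {u h : ℝ → ℝ} {h' t : ℝ}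
    (hu : ∀ s, deriv (deriv u) s + h s = 0) (hh : HasDerivAt h h' t) :
    HasDerivAt (deriv (deriv u)) (-h') t := by
  rw [show deriv (deriv u) = -h from funext fun s => eq_neg_of_add_eq_zero_left (hu s)]
  exact hh.neg

theorem hasDerivAt_wronskian {p q : ℝ → ℝ} {p₂ q₂ t : ℝ} (hp : DifferentiableAt ℝ p t)
    (hq : DifferentiableAt ℝ q t) (hp₂ : HasDerivAt (deriv p) p₂ t)
    (hq₂ : HasDerivAt (deriv q) q₂ t) :
    HasDerivAt (fun s => p s * deriv q s - deriv p s * q s) (p t * q₂ - p₂ * q t) t :=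
  ((hp.hasDerivAt.mul hq₂).sub (hp₂.mul hq.hasDerivAt)).congr_deriv (by ring)

theorem stmt_19_general (T : ℝ) (f φ Φ F₃ F₁₃ F₂₃ : ℝ → ℝ)
    (hf : ContDiff ℝ 2 f) (hφ : ContDiff ℝ 3 φ) (hΦ : ContDiff ℝ 3 Φ)
    (hφper : ∀ t, φ (t + T) = φ t) (hΦper : ∀ t, Φ (t + T) = Φ t)
    (hφeq : ∀ t, deriv (deriv φ) t + f (φ t) = 0)
    (hF3 : ContDiff ℝ 1 F₃)
    (h13 : Continuous F₁₃) (h23 : Continuous F₂₃)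
    (hF3' : ∀ t, deriv F₃ t = F₁₃ t * deriv φ t + F₂₃ t)
    (hΦeq : ∀ t, deriv (deriv Φ) t + deriv f (φ t) * Φ t + F₃ t = 0) :
    (∫ t in (0 : ℝ)..T,
        (Φ t * deriv (deriv f) (φ t) + F₁₃ t) * (deriv φ t) ^ 2)
      + (∫ t in (0 : ℝ)..T, F₂₃ t * deriv φ t) = 0 := by
  have hφ₁ : ContDiff ℝ 2 (deriv φ) := hφ.deriv'
  have hΦ₁ : ContDiff ℝ 2 (deriv Φ) := hΦ.deriv'
  have hf₁ : ContDiff ℝ 1 (deriv f) := hf.deriv'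
  have hφ' (t : ℝ) : HasDerivAt φ (deriv φ t) t :=
    (hφ.differentiable (by norm_num) t).hasDerivAt
  have hφ''' (t : ℝ) : HasDerivAt (deriv (deriv φ)) (-(deriv f (φ t) * deriv φ t)) t :=
    hasDerivAt_deriv_deriv_of_add_eq_zero hφeq
      ((hf.differentiable (by norm_num) _).hasDerivAt.comp t (hφ' t))
  have hΦ''' (t : ℝ) : HasDerivAt (deriv (deriv Φ)) (-(deriv (deriv f) (φ t) * deriv φ t * Φ t
      + deriv f (φ t) * deriv Φ t + (F₁₃ t * deriv φ t + F₂₃ t))) t := by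
    have hF₃ := (hF3.differentiable (by norm_num) t).hasDerivAt
    rw [hF3'] at hF₃
    exact hasDerivAt_deriv_deriv_of_add_eq_zero (fun s => (add_assoc _ _ _).symm.trans (hΦeq s))
      ((((hf₁.differentiable (by norm_num) _).hasDerivAt.comp t (hφ' t)).mul
        (hΦ.differentiable (by norm_num) t).hasDerivAt).add hF₃)
  have hW (t : ℝ) := hasDerivAt_wronskian (hΦ₁.differentiable (by norm_num) t)
    (hφ₁.differentiable (by norm_num) t) (hΦ''' t) (hφ''' t)
  have hφ'per := Periodic.deriv hφper
  have hΦ'per := Periodic.deriv hΦper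
  have hWper : Periodic
      (fun t => deriv Φ t * deriv (deriv φ) t - deriv (deriv Φ) t * deriv φ t) T :=
    (hΦ'per.mul hφ'per.deriv).sub (hΦ'per.deriv.mul hφ'per)
  have hc₁ : Continuous fun t => (Φ t * deriv (deriv f) (φ t) + F₁₃ t) * deriv φ t ^ 2 :=
    ((hΦ.continuous.mul ((hf₁.continuous_deriv le_rfl).comp hφ.continuous)).add h13).mul
      (hφ₁.continuous.pow 2)
  have hc₂ : Continuous fun t => F₂₃ t * deriv φ t := h23.mul hφ₁.continuous
  rw [← intervalIntegral.integral_add (hc₁.intervalIntegrable 0 T) (hc₂.intervalIntegrable 0 T)]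
  simpa using hWper.integral_eq_zero_of_hasDerivAt
    (g' := fun t => (Φ t * deriv (deriv f) (φ t) + F₁₃ t) * deriv φ t ^ 2 + F₂₃ t * deriv φ t)
    (fun t => (hW t).congr_deriv (by ring)) 0 ((hc₁.add hc₂).intervalIntegrable _ _)

theorem stmt_19 (T : ℝ) (hT : 0 < T) (f φ Φ F₃ F₁₃ F₂₃ : ℝ → ℝ)
    (hf : ContDiff ℝ 2 f) (hφ : ContDiff ℝ 3 φ) (hΦ : ContDiff ℝ 3 Φ)
    (hφper : ∀ t, φ (t + T) = φ t) (hΦper : ∀ t, Φ (t + T) = Φ t)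
    (hφeq : ∀ t, deriv (deriv φ) t + f (φ t) = 0)
    (hF3 : ContDiff ℝ 1 F₃) (hF3per : ∀ t, F₃ (t + T) = F₃ t)
    (h13 : Continuous F₁₃) (h23 : Continuous F₂₃)
    (h13per : ∀ t, F₁₃ (t + T) = F₁₃ t) (h23per : ∀ t, F₂₃ (t + T) = F₂₃ t)
    (hF3' : ∀ t, deriv F₃ t = F₁₃ t * deriv φ t + F₂₃ t)
    (hΦeq : ∀ t, deriv (deriv Φ) t + deriv f (φ t) * Φ t + F₃ t = 0) :
    (∫ t in (0 : ℝ)..T,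
        (Φ t * deriv (deriv f) (φ t) + F₁₃ t) * (deriv φ t) ^ 2)
      + (∫ t in (0 : ℝ)..T, F₂₃ t * deriv φ t) = 0 :=
  stmt_19_general T f φ Φ F₃ F₁₃ F₂₃ hf hφ hΦ hφper hΦper hφeq hF3 h13 h23 hF3' hΦeq
end
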